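/- Let ε ∈ (0,1], let k ≥ 1 be an integer, and let Q be the output of the Frequent Directions algorithm run on an n×d matrix A with parameter ℓ = ⌈k + k/ε⌉. Then ‖A‖_F² − ‖A_k‖_F² ≤ ‖A‖_F² − ‖Q_k‖_F² ≤ (1+ε)(‖A‖_F² − ‖A_k‖_F²). -/

import Mathlib

/-!
Each Frequent Directions step changes `‖Q x‖²` by `(aᵢ ⬝ x)² - δᵢ ‖Yᵢᵀ x‖²` and `‖Q‖_F²` by
`‖aᵢ‖² - ℓ δᵢ`, so with `Δ = ∑ δᵢ` the final sketch satisfies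
`‖A x‖² - Δ ‖x‖² ≤ ‖Q x‖² ≤ ‖A x‖²` and `‖Q‖_F² = ‖A‖_F² - ℓ Δ`.
By the Ky Fan principle the top `k` right singular vectors of a matrix maximise
`∑_{i<k} ‖M wᵢ‖²` over orthonormal families `w`. Applied to `A` with `w = y` this gives the lower
bound; applied to `Q` with `w = v` it gives `‖A‖_F² - ‖Q_k‖_F² ≤ ‖A - A_k‖_F² + k Δ`. Comparing
Frobenius norms gives `(ℓ - k) Δ ≤ ‖A - A_k‖_F²`, and `ℓ ≥ k + k / ε` turns this into
`k Δ ≤ ε ‖A - A_k‖_F²`.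
-/

open Matrix

/-- The squared Euclidean norm of a vector in `ℝ^m`. -/
noncomputable def sqNorm {m : ℕ} (v : Fin m → ℝ) : ℝ := ∑ i, v i ^ 2

/-- The squared Frobenius norm of a real matrix. -/
noncomputable def frobSq {m p : ℕ} (M : Matrix (Fin m) (Fin p) ℝ) : ℝ :=
  ∑ i, ∑ j, M i j ^ 2

open Finset

lemma sqNorm_eq_dotProduct {m : ℕ} (v : Fin m → ℝ) : sqNorm v = v ⬝ᵥ v := by
  simp [sqNorm, dotProduct, sq]

lemma sqNorm_nonneg {m : ℕ} (v : Fin m → ℝ) : 0 ≤ sqNorm v :=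
  sum_nonneg fun _ _ => sq_nonneg _

lemma sqNorm_mulVec {m p : ℕ} (M : Matrix (Fin m) (Fin p) ℝ) (x : Fin p → ℝ) :
    sqNorm (M *ᵥ x) = x ⬝ᵥ (Mᵀ * M) *ᵥ x := by
  rw [sqNorm_eq_dotProduct, ← mulVec_mulVec, dotProduct_mulVec x Mᵀ, vecMul_transpose]

lemma sqNorm_mulVec_of_transpose_mul_self {m p : ℕ} {Z : Matrix (Fin m) (Fin p) ℝ}
    (hZ : Zᵀ * Z = 1) (x : Fin p → ℝ) : sqNorm (Z *ᵥ x) = sqNorm x := by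
  rw [sqNorm_mulVec, hZ, one_mulVec, sqNorm_eq_dotProduct]

lemma sqNorm_transpose_mulVec_le {m p : ℕ} {Y : Matrix (Fin m) (Fin p) ℝ}
    (hY : Yᵀ * Y = 1) (x : Fin m → ℝ) : sqNorm (Yᵀ *ᵥ x) ≤ sqNorm x := by
  -- `Y Yᵀ x` is the orthogonal projection of `x`, so `‖x‖² - ‖Yᵀ x‖² = ‖x - Y Yᵀ x‖²`
  have hproj : x ⬝ᵥ Y *ᵥ (Yᵀ *ᵥ x) = sqNorm (Yᵀ *ᵥ x) := by
    rw [dotProduct_mulVec, ← mulVec_transpose, sqNorm_eq_dotProduct]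
  have hexpand : sqNorm (x - Y *ᵥ (Yᵀ *ᵥ x)) = sqNorm x - sqNorm (Yᵀ *ᵥ x) := by
    rw [sqNorm_eq_dotProduct, sub_dotProduct, dotProduct_sub, dotProduct_sub,
      dotProduct_comm (Y *ᵥ _) x, hproj, ← sqNorm_eq_dotProduct (Y *ᵥ _),
      sqNorm_mulVec_of_transpose_mul_self hY, ← sqNorm_eq_dotProduct]
    ring
  linarith [sqNorm_nonneg (x - Y *ᵥ (Yᵀ *ᵥ x))]

lemma sqNorm_diagonal_mulVec {m : ℕ} (g w : Fin m → ℝ) :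
    sqNorm (diagonal g *ᵥ w) = ∑ j, g j ^ 2 * w j ^ 2 := by
  simp [sqNorm, mulVec_diagonal, mul_pow]

lemma sum_comp_update_add {ι α : Type*} [Fintype ι] [DecidableEq ι] (g : α → ℝ) (f : ι → α)
    (r : ι) (c : α) : ∑ i, g (Function.update f r c i) + g (f r) = ∑ i, g (f i) + g c := by
  have hcomp : ∀ i, g (Function.update f r c i) = Function.update (g ∘ f) r (g c) i :=
    fun i => by rw [← Function.comp_update]; rfl
  simp only [hcomp]
  rw [sum_update_of_mem (mem_univ r),
    sum_eq_add_sum_sdiff_singleton_of_mem (mem_univ r) (f := fun i => g (f i))]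
  simp only [Function.comp_apply]
  ring

lemma frobSq_eq_trace {m p : ℕ} (M : Matrix (Fin m) (Fin p) ℝ) :
    frobSq M = trace (Mᵀ * M) := by
  simp only [frobSq, trace, Matrix.diag, mul_apply, transpose_apply, sq]
  exact sum_comm

lemma frobSq_orthogonal_mul {m p q : ℕ} {Z : Matrix (Fin m) (Fin p) ℝ} (hZ : Zᵀ * Z = 1)
    (N : Matrix (Fin p) (Fin q) ℝ) : frobSq (Z * N) = frobSq N := by
  rw [frobSq_eq_trace, frobSq_eq_trace, transpose_mul, Matrix.mul_assoc,
    ← Matrix.mul_assoc Zᵀ, hZ, Matrix.one_mul]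

lemma frobSq_diagonal_mul_transpose {m p : ℕ} (g : Fin m → ℝ) {Y : Matrix (Fin p) (Fin m) ℝ}
    (hY : Yᵀ * Y = 1) : frobSq (diagonal g * Yᵀ) = ∑ j, g j ^ 2 := by
  rw [frobSq_eq_trace, transpose_mul, transpose_transpose, diagonal_transpose, Matrix.mul_assoc,
    trace_mul_comm]
  simp only [Matrix.mul_assoc, hY, Matrix.mul_one, diagonal_mul_diagonal, trace_diagonal]
  simp [sq]

lemma frobSq_updateRow_of_eq_zero {m p : ℕ} {M : Matrix (Fin m) (Fin p) ℝ} {r : Fin m}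
    (hr : M r = 0) (b : Fin p → ℝ) : frobSq (M.updateRow r b) = frobSq M + sqNorm b := by
  have h := sum_comp_update_add sqNorm M r b
  rwa [hr, show sqNorm (0 : Fin p → ℝ) = 0 by simp [sqNorm], add_zero] at h

lemma sqNorm_updateRow_mulVec_of_eq_zero {m p : ℕ} {M : Matrix (Fin m) (Fin p) ℝ} {r : Fin m}
    (hr : M r = 0) (b x : Fin p → ℝ) :
    sqNorm (M.updateRow r b *ᵥ x) = sqNorm (M *ᵥ x) + (b ⬝ᵥ x) ^ 2 := by
  have h := sum_comp_update_add (· ^ 2) (M *ᵥ x) r (b ⬝ᵥ x)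
  rwa [show (M *ᵥ x) r = 0 by simp [mulVec, hr], zero_pow two_ne_zero, add_zero,
    ← updateRow_mulVec] at h

section Orthonormal

variable {d : ℕ} {w : Matrix (Fin d) (Fin d) ℝ}

lemma transpose_mul_self_eq_one_of_orthonormal
    (hw : ∀ a b, ∑ t, w a t * w b t = if a = b then 1 else 0) : wᵀ * w = 1 :=
  mul_eq_one_comm.mp <| by ext a b; simpa [mul_apply, one_apply] using hw a b

lemma sqNorm_eq_one_of_orthonormal (hw : ∀ a b, ∑ t, w a t * w b t = if a = b then 1 else 0)
    (a : Fin d) : sqNorm (w a) = 1 := by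
  simpa [sqNorm, sq] using hw a a

lemma sum_sq_dotProduct_of_orthonormal
    (hw : ∀ a b, ∑ t, w a t * w b t = if a = b then 1 else 0) (x : Fin d → ℝ) :
    ∑ a, (w a ⬝ᵥ x) ^ 2 = sqNorm x :=
  sqNorm_mulVec_of_transpose_mul_self (transpose_mul_self_eq_one_of_orthonormal hw) x

lemma frobSq_eq_sum_sqNorm_mulVec_of_orthonormal {m : ℕ}
    (hw : ∀ a b, ∑ t, w a t * w b t = if a = b then 1 else 0) (M : Matrix (Fin m) (Fin d) ℝ) :
    frobSq M = ∑ a, sqNorm (M *ᵥ w a) := by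
  calc frobSq M = ∑ i, ∑ a, (w a ⬝ᵥ M i) ^ 2 := by
        simp only [sum_sq_dotProduct_of_orthonormal hw]; rfl
    _ = ∑ a, sqNorm (M *ᵥ w a) := by
        rw [sum_comm]
        simp only [sqNorm, mulVec, dotProduct_comm]

variable {m : ℕ} {M : Matrix (Fin m) (Fin d) ℝ} {μ : Fin d → ℝ}

lemma sqNorm_mulVec_eq_sum_of_eigenbasis
    (hw : ∀ a b, ∑ t, w a t * w b t = if a = b then 1 else 0)
    (hMw : ∀ a, (Mᵀ * M) *ᵥ w a = μ a ^ 2 • w a) (x : Fin d → ℝ) :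
    sqNorm (M *ᵥ x) = ∑ a, μ a ^ 2 * (w a ⬝ᵥ x) ^ 2 := by
  have hgram : Mᵀ * M = wᵀ * diagonal (fun a => μ a ^ 2) * w := by
    have hcols : Mᵀ * M * wᵀ = wᵀ * diagonal (fun a => μ a ^ 2) := by
      ext t a
      have h := congrFun (hMw a) t
      rw [Pi.smul_apply, smul_eq_mul] at h
      rw [mul_diagonal, transpose_apply, mul_comm, ← h]
      rfl
    rw [← hcols, Matrix.mul_assoc, transpose_mul_self_eq_one_of_orthonormal hw, Matrix.mul_one]
  rw [sqNorm_mulVec, hgram, ← mulVec_mulVec, ← mulVec_mulVec, dotProduct_mulVec,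
    vecMul_transpose, dotProduct]
  exact sum_congr rfl fun a _ => by rw [mulVec_diagonal, show (w *ᵥ x) a = w a ⬝ᵥ x from rfl]; ring

lemma sqNorm_mulVec_eigenvector (hw : ∀ a b, ∑ t, w a t * w b t = if a = b then 1 else 0)
    (hMw : ∀ a, (Mᵀ * M) *ᵥ w a = μ a ^ 2 • w a) (a : Fin d) :
    sqNorm (M *ᵥ w a) = μ a ^ 2 := by
  rw [sqNorm_mulVec, hMw, dotProduct_smul, ← sqNorm_eq_dotProduct,
    sqNorm_eq_one_of_orthonormal hw, smul_eq_mul, mul_one]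

end Orthonormal

lemma sum_mul_le_sum_filter_lt {d : ℕ} (k : ℕ) {g W : Fin d → ℝ} (hg : Antitone g)
    (hg0 : ∀ a, 0 ≤ g a) (hW0 : ∀ a, 0 ≤ W a) (hW1 : ∀ a, W a ≤ 1)
    (hW : ∑ a, W a = #(univ.filter (fun a : Fin d => (a : ℕ) < k))) :
    ∑ a, g a * W a ≤ ∑ a ∈ univ.filter (fun a : Fin d => (a : ℕ) < k), g a := by
  -- a threshold `t` separating the values of `g` before and after index `k`
  obtain ⟨t, hlt, hge⟩ : ∃ t, (∀ a : Fin d, (a : ℕ) < k → t ≤ g a) ∧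
      ∀ a : Fin d, k ≤ (a : ℕ) → g a ≤ t := by
    by_cases hkd : k < d
    · exact ⟨g ⟨k, hkd⟩, fun a ha => hg (Fin.mk_le_mk.mpr ha.le), fun a ha => hg ha⟩
    · exact ⟨0, fun a _ => hg0 a, fun a ha => absurd a.isLt (by omega)⟩
  have hpoint : ∀ a : Fin d, g a * W a ≤
      (if (a : ℕ) < k then g a else 0) + t * (W a - if (a : ℕ) < k then 1 else 0) := by
    intro a
    split_ifs with ha
    · nlinarith [hlt a ha, hW1 a]
    · nlinarith [hge a (not_lt.mp ha), hW0 a]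
  calc ∑ a, g a * W a ≤ ∑ a : Fin d,
        ((if (a : ℕ) < k then g a else 0) + t * (W a - if (a : ℕ) < k then 1 else 0)) :=
        sum_le_sum fun a _ => hpoint a
    _ = ∑ a ∈ univ.filter (fun a : Fin d => (a : ℕ) < k), g a := by
        rw [sum_add_distrib, ← mul_sum, sum_sub_distrib, hW, ← sum_filter, ← sum_filter]
        simp

theorem sum_sqNorm_mulVec_le_of_eigenbasis {m d : ℕ} (k : ℕ) {M : Matrix (Fin m) (Fin d) ℝ}
    {u w : Matrix (Fin d) (Fin d) ℝ} {μ : Fin d → ℝ}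
    (hu : ∀ a b, ∑ t, u a t * u b t = if a = b then 1 else 0) (hμ : Antitone μ)
    (hμ0 : ∀ a, 0 ≤ μ a) (hMu : ∀ a, (Mᵀ * M) *ᵥ u a = μ a ^ 2 • u a)
    (hw : ∀ a b, ∑ t, w a t * w b t = if a = b then 1 else 0) :
    ∑ i ∈ univ.filter (fun i : Fin d => (i : ℕ) < k), sqNorm (M *ᵥ w i) ≤
      ∑ i ∈ univ.filter (fun i : Fin d => (i : ℕ) < k), sqNorm (M *ᵥ u i) := by
  set F := univ.filter (fun i : Fin d => (i : ℕ) < k)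
  -- `W a` is the squared length of the projection of `u a` onto the span of the `w i`, `i ∈ F`
  set W : Fin d → ℝ := fun a => ∑ i ∈ F, (u a ⬝ᵥ w i) ^ 2 with hWdef
  have hW1 : ∀ a, W a ≤ 1 := fun a =>
    calc W a ≤ ∑ i, (w i ⬝ᵥ u a) ^ 2 := by
          simp only [hWdef, dotProduct_comm (u a)]
          exact sum_le_sum_of_subset_of_nonneg (subset_univ F) fun _ _ _ => sq_nonneg _
      _ = 1 := by rw [sum_sq_dotProduct_of_orthonormal hw, sqNorm_eq_one_of_orthonormal hu]
  have hWsum : ∑ a, W a = #F := by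
    rw [sum_comm]
    simp only [sum_sq_dotProduct_of_orthonormal hu, sqNorm_eq_one_of_orthonormal hw]
    simp
  calc ∑ i ∈ F, sqNorm (M *ᵥ w i) = ∑ a, μ a ^ 2 * W a := by
        simp only [sqNorm_mulVec_eq_sum_of_eigenbasis hu hMu, hWdef, mul_sum]
        exact sum_comm
    _ ≤ ∑ a ∈ F, μ a ^ 2 := sum_mul_le_sum_filter_lt k
        (fun a b hab => pow_le_pow_left₀ (hμ0 b) (hμ hab) 2) (fun a => sq_nonneg _)
        (fun a => sum_nonneg fun _ _ => sq_nonneg _) hW1 hWsum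
    _ = ∑ i ∈ F, sqNorm (M *ᵥ u i) := by simp only [sqNorm_mulVec_eigenvector hu hMu]

theorem Fin.sum_succ_sub_castSucc {M : Type*} [AddCommGroup M] {n : ℕ} (f : Fin (n + 1) → M) :
    ∑ i : Fin n, (f i.succ - f i.castSucc) = f (Fin.last n) - f 0 := by
  induction n with
  | zero => simp
  | succ n ih =>
    rw [Fin.sum_univ_castSucc]
    simp only [Fin.succ_castSucc, ih (fun i => f i.castSucc), Fin.succ_last, Fin.castSucc_zero]
    abel

/-- `Q i` is the sketch `Qⁱ` of Frequent Directions after the first `i` rows of `A`, `r` indexes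
its last row, and `Z i * diagonal (s i) * (Y i)ᵀ` is the singular value decomposition of `Cⁱ`. -/
structure IsFrequentDirectionsRun {n d ℓ : ℕ} (A : Matrix (Fin n) (Fin d) ℝ) (r : Fin ℓ)
    (Q : Fin (n + 1) → Matrix (Fin ℓ) (Fin d) ℝ) (Z : Fin n → Matrix (Fin ℓ) (Fin ℓ) ℝ)
    (Y : Fin n → Matrix (Fin d) (Fin ℓ) ℝ) (s : Fin n → Fin ℓ → ℝ) (δ : Fin n → ℝ) : Prop where
  le_last : ∀ j, j ≤ r
  init : Q 0 = 0
  svd : ∀ i, (Q i.castSucc).updateRow r (A i) = Z i * diagonal (s i) * (Y i)ᵀ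
  orthogonal_left : ∀ i, (Z i)ᵀ * Z i = 1
  orthonormal_right : ∀ i, (Y i)ᵀ * Y i = 1
  antitone : ∀ i, Antitone (s i)
  nonneg : ∀ i j, 0 ≤ s i j
  shift_eq : ∀ i, δ i = s i r ^ 2
  shrink : ∀ i, Q i.succ = diagonal (fun j => √(s i j ^ 2 - δ i)) * (Y i)ᵀ

namespace IsFrequentDirectionsRun

variable {n d ℓ : ℕ} {A : Matrix (Fin n) (Fin d) ℝ} {r : Fin ℓ}
  {Q : Fin (n + 1) → Matrix (Fin ℓ) (Fin d) ℝ} {Z : Fin n → Matrix (Fin ℓ) (Fin ℓ) ℝ}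
  {Y : Fin n → Matrix (Fin d) (Fin ℓ) ℝ} {s : Fin n → Fin ℓ → ℝ} {δ : Fin n → ℝ}

lemma shift_le (h : IsFrequentDirectionsRun A r Q Z Y s δ) (i : Fin n) (j : Fin ℓ) :
    δ i ≤ s i j ^ 2 := by
  rw [h.shift_eq]
  exact pow_le_pow_left₀ (h.nonneg i r) (h.antitone i (h.le_last j)) 2

lemma shift_nonneg (h : IsFrequentDirectionsRun A r Q Z Y s δ) (i : Fin n) : 0 ≤ δ i := by
  rw [h.shift_eq]
  positivity

lemma row_last_eq_zero (h : IsFrequentDirectionsRun A r Q Z Y s δ) (i : Fin (n + 1)) :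
    Q i r = 0 := by
  cases i using Fin.cases with
  | zero => rw [h.init]; rfl
  | succ i =>
    ext t
    simp [h.shrink i, h.shift_eq]

lemma sqNorm_mulVec_succ (h : IsFrequentDirectionsRun A r Q Z Y s δ) (i : Fin n)
    (x : Fin d → ℝ) : sqNorm (Q i.succ *ᵥ x) =
      sqNorm (Q i.castSucc *ᵥ x) + (A i ⬝ᵥ x) ^ 2 - δ i * sqNorm ((Y i)ᵀ *ᵥ x) := by
  rw [← sqNorm_updateRow_mulVec_of_eq_zero (h.row_last_eq_zero _), h.svd, h.shrink,
    ← mulVec_mulVec, sqNorm_diagonal_mulVec, Matrix.mul_assoc, ← mulVec_mulVec,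
    sqNorm_mulVec_of_transpose_mul_self (h.orthogonal_left i), ← mulVec_mulVec,
    sqNorm_diagonal_mulVec, sqNorm, mul_sum, ← sum_sub_distrib]
  exact sum_congr rfl fun j _ => by rw [Real.sq_sqrt (sub_nonneg.2 (h.shift_le i j))]; ring

lemma frobSq_succ (h : IsFrequentDirectionsRun A r Q Z Y s δ) (i : Fin n) :
    frobSq (Q i.succ) = frobSq (Q i.castSucc) + sqNorm (A i) - ℓ * δ i := by
  rw [← frobSq_updateRow_of_eq_zero (h.row_last_eq_zero _), h.svd, Matrix.mul_assoc,
    frobSq_orthogonal_mul (h.orthogonal_left i),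
    frobSq_diagonal_mul_transpose _ (h.orthonormal_right i), h.shrink,
    frobSq_diagonal_mul_transpose _ (h.orthonormal_right i)]
  simp [Real.sq_sqrt (sub_nonneg.2 (h.shift_le i _)), sum_sub_distrib]

lemma sqNorm_mulVec_last (h : IsFrequentDirectionsRun A r Q Z Y s δ) (x : Fin d → ℝ) :
    sqNorm (Q (Fin.last n) *ᵥ x) = sqNorm (A *ᵥ x) - ∑ i, δ i * sqNorm ((Y i)ᵀ *ᵥ x) := by
  have htel := Fin.sum_succ_sub_castSucc fun i => sqNorm (Q i *ᵥ x)
  have hstep : ∀ i : Fin n, sqNorm (Q i.succ *ᵥ x) - sqNorm (Q i.castSucc *ᵥ x) =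
      (A i ⬝ᵥ x) ^ 2 - δ i * sqNorm ((Y i)ᵀ *ᵥ x) := fun i => by
    rw [h.sqNorm_mulVec_succ]; ring
  rw [sum_congr rfl fun i _ => hstep i, sum_sub_distrib, h.init, zero_mulVec] at htel
  have h0 : sqNorm (0 : Fin ℓ → ℝ) = 0 := by simp [sqNorm]
  have hA : sqNorm (A *ᵥ x) = ∑ i, (A i ⬝ᵥ x) ^ 2 := rfl
  linarith

lemma frobSq_last (h : IsFrequentDirectionsRun A r Q Z Y s δ) :
    frobSq (Q (Fin.last n)) = frobSq A - ℓ * ∑ i, δ i := by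
  have htel := Fin.sum_succ_sub_castSucc fun i => frobSq (Q i)
  have hstep : ∀ i : Fin n, frobSq (Q i.succ) - frobSq (Q i.castSucc) =
      sqNorm (A i) - ℓ * δ i := fun i => by
    rw [h.frobSq_succ]; ring
  rw [sum_congr rfl fun i _ => hstep i, sum_sub_distrib, ← mul_sum, h.init] at htel
  have h0 : frobSq (0 : Matrix (Fin ℓ) (Fin d) ℝ) = 0 := by simp [frobSq]
  have hA : frobSq A = ∑ i, sqNorm (A i) := rfl
  linarith

lemma sqNorm_mulVec_last_le (h : IsFrequentDirectionsRun A r Q Z Y s δ) (x : Fin d → ℝ) :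
    sqNorm (Q (Fin.last n) *ᵥ x) ≤ sqNorm (A *ᵥ x) := by
  rw [h.sqNorm_mulVec_last]
  exact sub_le_self _ (sum_nonneg fun i _ => mul_nonneg (h.shift_nonneg i) (sqNorm_nonneg _))

lemma sub_le_sqNorm_mulVec_last (h : IsFrequentDirectionsRun A r Q Z Y s δ) (x : Fin d → ℝ) :
    sqNorm (A *ᵥ x) - (∑ i, δ i) * sqNorm x ≤ sqNorm (Q (Fin.last n) *ᵥ x) := by
  rw [h.sqNorm_mulVec_last, sum_mul]
  exact sub_le_sub_left (sum_le_sum fun i _ => mul_le_mul_of_nonneg_left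
    (sqNorm_transpose_mulVec_le (h.orthonormal_right i) x) (h.shift_nonneg i)) _

end IsFrequentDirectionsRun

section Residual

variable {n m d : ℕ} {A : Matrix (Fin n) (Fin d) ℝ} {B : Matrix (Fin m) (Fin d) ℝ}
  {v y : Matrix (Fin d) (Fin d) ℝ}

lemma card_filter_val_lt_le (d k : ℕ) : #(univ.filter (fun i : Fin d => (i : ℕ) < k)) ≤ k := by
  rw [Fin.card_filter_val_lt]
  exact min_le_right d k

theorem residual_le_residual_of_sqNorm_mulVec_le (k : ℕ) {σ : Fin d → ℝ}
    (hBA : ∀ x, sqNorm (B *ᵥ x) ≤ sqNorm (A *ᵥ x))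
    (hv : ∀ a b, ∑ t, v a t * v b t = if a = b then 1 else 0) (hσ : Antitone σ)
    (hσ0 : ∀ a, 0 ≤ σ a) (hAv : ∀ a, (Aᵀ * A) *ᵥ v a = σ a ^ 2 • v a)
    (hy : ∀ a b, ∑ t, y a t * y b t = if a = b then 1 else 0) :
    frobSq A - ∑ i ∈ univ.filter (fun i : Fin d => (i : ℕ) < k), sqNorm (A *ᵥ v i) ≤
      frobSq A - ∑ i ∈ univ.filter (fun i : Fin d => (i : ℕ) < k), sqNorm (B *ᵥ y i) :=
  sub_le_sub_left ((sum_le_sum fun i _ => hBA (y i)).trans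
    (sum_sqNorm_mulVec_le_of_eigenbasis k hv hσ hσ0 hAv hy)) _

theorem residual_le_one_add_mul_residual_of_sketch (k ℓ : ℕ) {Δ ε : ℝ} {τ : Fin d → ℝ}
    (hΔ : 0 ≤ Δ) (hε : 0 ≤ ε) (hkℓ : (k : ℝ) ≤ ε * (ℓ - k))
    (hAB : ∀ x, sqNorm (A *ᵥ x) - Δ * sqNorm x ≤ sqNorm (B *ᵥ x))
    (hfrob : frobSq B + ℓ * Δ ≤ frobSq A)
    (hv : ∀ a b, ∑ t, v a t * v b t = if a = b then 1 else 0)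
    (hy : ∀ a b, ∑ t, y a t * y b t = if a = b then 1 else 0) (hτ : Antitone τ)
    (hτ0 : ∀ a, 0 ≤ τ a) (hBy : ∀ a, (Bᵀ * B) *ᵥ y a = τ a ^ 2 • y a) :
    frobSq A - ∑ i ∈ univ.filter (fun i : Fin d => (i : ℕ) < k), sqNorm (B *ᵥ y i) ≤
      (1 + ε) * (frobSq A - ∑ i ∈ univ.filter (fun i : Fin d => (i : ℕ) < k),
        sqNorm (A *ᵥ v i)) := by
  set F := univ.filter (fun i : Fin d => (i : ℕ) < k)
  set R := frobSq A - ∑ i ∈ F, sqNorm (A *ᵥ v i)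
  have hcard : (#F : ℝ) ≤ k := by exact_mod_cast card_filter_val_lt_le d k
  have hBy_ge : ∑ i ∈ F, sqNorm (B *ᵥ v i) ≤ ∑ i ∈ F, sqNorm (B *ᵥ y i) :=
    sum_sqNorm_mulVec_le_of_eigenbasis k hy hτ hτ0 hBy hv
  have hBv_ge : ∑ i ∈ F, sqNorm (A *ᵥ v i) - #F * Δ ≤ ∑ i ∈ F, sqNorm (B *ᵥ v i) := by
    rw [← nsmul_eq_mul, ← sum_const, ← sum_sub_distrib]
    exact sum_le_sum fun i _ => by simpa [sqNorm_eq_one_of_orthonormal hv] using hAB (v i)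
  have hBv_le : ∑ i ∈ F, sqNorm (B *ᵥ v i) ≤ frobSq B := by
    rw [frobSq_eq_sum_sqNorm_mulVec_of_orthonormal hv]
    exact sum_le_sum_of_subset_of_nonneg (subset_univ F) fun _ _ _ => sqNorm_nonneg _
  have hshrink : (ℓ - #F) * Δ ≤ R := by linarith
  have hcardΔ : #F * Δ ≤ ε * R :=
    calc #F * Δ ≤ k * Δ := mul_le_mul_of_nonneg_right hcard hΔ
      _ ≤ ε * (ℓ - k) * Δ := mul_le_mul_of_nonneg_right hkℓ hΔ
      _ ≤ ε * ((ℓ - #F) * Δ) := by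
          rw [mul_assoc]
          exact mul_le_mul_of_nonneg_left (mul_le_mul_of_nonneg_right (by linarith) hΔ) hε
      _ ≤ ε * R := mul_le_mul_of_nonneg_left hshrink hε
  linarith

end Residual

lemma le_mul_sub_of_ceil_eq {k ℓ : ℕ} {ε : ℝ} (hε : 0 < ε) (hℓ : ℓ = ⌈(k : ℝ) + k / ε⌉₊) :
    (k : ℝ) ≤ ε * (ℓ - k) := by
  have h : (k : ℝ) / ε ≤ ℓ - k := by
    have := Nat.le_ceil ((k : ℝ) + k / ε)
    rw [← hℓ] at this
    linarith
  rwa [div_le_iff₀ hε, mul_comm] at h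

theorem fd_residual_norm_bounds_general
    (n d ℓ : ℕ) (hℓ : 0 < ℓ)
    (A : Matrix (Fin n) (Fin d) ℝ)
    (Q : Fin (n + 1) → Matrix (Fin ℓ) (Fin d) ℝ)
    (C : Fin n → Matrix (Fin ℓ) (Fin d) ℝ)
    (Z : Fin n → Matrix (Fin ℓ) (Fin ℓ) ℝ)
    (Y : Fin n → Matrix (Fin d) (Fin ℓ) ℝ)
    (s : Fin n → Fin ℓ → ℝ) (δ : Fin n → ℝ)
    -- the algorithm starts with the zero matrix
    (hQ0 : Q 0 = 0)
    -- `C i` is `Q^{i-1}` with its last row replaced by the `i`-th row of `A`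
    (hC : ∀ i : Fin n,
      C i = (Q i.castSucc).updateRow ⟨ℓ - 1, Nat.sub_lt hℓ Nat.one_pos⟩ (A i))
    -- a singular value decomposition `C i = Z S Yᵀ` of `C i`
    (hZ : ∀ i, (Z i)ᵀ * Z i = 1)
    (hY : ∀ i, (Y i)ᵀ * Y i = 1)
    (hSVD : ∀ i, C i = Z i * Matrix.diagonal (s i) * (Y i)ᵀ)
    (hmono : ∀ i, ∀ j j' : Fin ℓ, j ≤ j' → s i j' ≤ s i j)
    (hnn : ∀ i j, 0 ≤ s i j)
    -- `δ i` is the square of the smallest singular value of `C i`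
    (hδ : ∀ i, δ i = s i ⟨ℓ - 1, Nat.sub_lt hℓ Nat.one_pos⟩ ^ 2)
    -- the shrinking step producing `Q^i = S' Yᵀ`
    (hQs : ∀ i : Fin n,
      Q i.succ = Matrix.diagonal (fun j => Real.sqrt (s i j ^ 2 - δ i)) * (Y i)ᵀ)
    -- `v` is an orthonormal family of right singular vectors of `A`,
    -- ordered by decreasing singular values `σA`
    (v : Fin d → Fin d → ℝ) (σA : Fin d → ℝ)
    (hv : ∀ a b : Fin d, ∑ t, v a t * v b t = if a = b then 1 else 0)
    (hσmono : ∀ a b : Fin d, a ≤ b → σA b ≤ σA a)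
    (hσnn : ∀ a, 0 ≤ σA a)
    (hAv : ∀ a, (Aᵀ * A).mulVec (v a) = σA a ^ 2 • v a)
    -- `y` is an orthonormal family of right singular vectors of the output
    -- matrix `Q = Qⁿ`, ordered by decreasing singular values `τ`
    (y : Fin d → Fin d → ℝ) (τ : Fin d → ℝ)
    (hy : ∀ a b : Fin d, ∑ t, y a t * y b t = if a = b then 1 else 0)
    (hτmono : ∀ a b : Fin d, a ≤ b → τ b ≤ τ a)
    (hτnn : ∀ a, 0 ≤ τ a)
    (hQy : ∀ a, ((Q (Fin.last n))ᵀ * Q (Fin.last n)).mulVec (y a) = τ a ^ 2 • y a)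
    (ε : ℝ) (hε0 : 0 < ε) (k : ℕ)
    (hℓdef : ℓ = ⌈(k : ℝ) + (k : ℝ) / ε⌉₊)
 :
    frobSq A - (∑ i ∈ Finset.univ.filter (fun i : Fin d => (i : ℕ) < k), sqNorm (A.mulVec (v i))) ≤
      frobSq A - (∑ i ∈ Finset.univ.filter (fun i : Fin d => (i : ℕ) < k),
      sqNorm ((Q (Fin.last n)).mulVec (y i))) ∧
    frobSq A - (∑ i ∈ Finset.univ.filter (fun i : Fin d => (i : ℕ) < k),
      sqNorm ((Q (Fin.last n)).mulVec (y i))) ≤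
      (1 + ε) * (frobSq A - ∑ i ∈ Finset.univ.filter (fun i : Fin d => (i : ℕ) < k), sqNorm (A.mulVec (v i))) := by
  have run : IsFrequentDirectionsRun A ⟨ℓ - 1, Nat.sub_lt hℓ Nat.one_pos⟩ Q Z Y s δ :=
    { le_last := fun j => Fin.mk_le_mk.mpr (Nat.le_sub_one_of_lt j.isLt)
      init := hQ0
      svd := fun i => hC i ▸ hSVD i
      orthogonal_left := hZ
      orthonormal_right := hY
      antitone := hmono
      nonneg := hnn
      shift_eq := hδ
      shrink := hQs }
  exact ⟨residual_le_residual_of_sqNorm_mulVec_le k run.sqNorm_mulVec_last_le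
      hv hσmono hσnn hAv hy,
    residual_le_one_add_mul_residual_of_sketch k ℓ (sum_nonneg fun i _ => run.shift_nonneg i)
      hε0.le (le_mul_sub_of_ceil_eq hε0 hℓdef) run.sub_le_sqNorm_mulVec_last
      (by rw [run.frobSq_last]; linarith) hv hy hτmono hτnn hQy⟩

/-- Let `ε ∈ (0,1]`, let `k ≥ 1` be an integer, and let `Q` be the output of
the Frequent Directions algorithm run on an `n × d` matrix `A` with parameter
`ℓ = ⌈k + k/ε⌉`.  Then
`‖A‖_F² - ‖A_k‖_F² ≤ ‖A‖_F² - ‖Q_k‖_F² ≤ (1 + ε)(‖A‖_F² - ‖A_k‖_F²)`, where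
`‖A_k‖_F² = ∑_{i=1}^k ‖A v_i‖²` and `‖Q_k‖_F² = ∑_{i=1}^k ‖Q y_i‖²` for right
singular vectors `v` of `A` and `y` of `Q`, ordered by decreasing singular
values. -/
theorem fd_residual_norm_bounds
    (n d ℓ : ℕ) (hℓ : 0 < ℓ)
    (A : Matrix (Fin n) (Fin d) ℝ)
    (Q : Fin (n + 1) → Matrix (Fin ℓ) (Fin d) ℝ)
    (C : Fin n → Matrix (Fin ℓ) (Fin d) ℝ)
    (Z : Fin n → Matrix (Fin ℓ) (Fin ℓ) ℝ)
    (Y : Fin n → Matrix (Fin d) (Fin ℓ) ℝ)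
    (s : Fin n → Fin ℓ → ℝ) (δ : Fin n → ℝ)
    -- the algorithm starts with the zero matrix
    (hQ0 : Q 0 = 0)
    -- `C i` is `Q^{i-1}` with its last row replaced by the `i`-th row of `A`
    (hC : ∀ i : Fin n,
      C i = (Q i.castSucc).updateRow ⟨ℓ - 1, Nat.sub_lt hℓ Nat.one_pos⟩ (A i))
    -- a singular value decomposition `C i = Z S Yᵀ` of `C i`
    (hZ : ∀ i, (Z i)ᵀ * Z i = 1)
    (hY : ∀ i, (Y i)ᵀ * Y i = 1)
    (hSVD : ∀ i, C i = Z i * Matrix.diagonal (s i) * (Y i)ᵀ)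
    (hmono : ∀ i, ∀ j j' : Fin ℓ, j ≤ j' → s i j' ≤ s i j)
    (hnn : ∀ i j, 0 ≤ s i j)
    -- `δ i` is the square of the smallest singular value of `C i`
    (hδ : ∀ i, δ i = s i ⟨ℓ - 1, Nat.sub_lt hℓ Nat.one_pos⟩ ^ 2)
    -- the shrinking step producing `Q^i = S' Yᵀ`
    (hQs : ∀ i : Fin n,
      Q i.succ = Matrix.diagonal (fun j => Real.sqrt (s i j ^ 2 - δ i)) * (Y i)ᵀ)
    -- `v` is an orthonormal family of right singular vectors of `A`,
    -- ordered by decreasing singular values `σA`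
    (v : Fin d → Fin d → ℝ) (σA : Fin d → ℝ)
    (hv : ∀ a b : Fin d, ∑ t, v a t * v b t = if a = b then 1 else 0)
    (hσmono : ∀ a b : Fin d, a ≤ b → σA b ≤ σA a)
    (hσnn : ∀ a, 0 ≤ σA a)
    (hAv : ∀ a, (Aᵀ * A).mulVec (v a) = σA a ^ 2 • v a)
    -- `y` is an orthonormal family of right singular vectors of the output
    -- matrix `Q = Qⁿ`, ordered by decreasing singular values `τ`
    (y : Fin d → Fin d → ℝ) (τ : Fin d → ℝ)
    (hy : ∀ a b : Fin d, ∑ t, y a t * y b t = if a = b then 1 else 0)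
    (hτmono : ∀ a b : Fin d, a ≤ b → τ b ≤ τ a)
    (hτnn : ∀ a, 0 ≤ τ a)
    (hQy : ∀ a, ((Q (Fin.last n))ᵀ * Q (Fin.last n)).mulVec (y a) = τ a ^ 2 • y a)
    (ε : ℝ) (hε0 : 0 < ε) (hε1 : ε ≤ 1) (k : ℕ) (hk : 1 ≤ k)
    (hℓdef : ℓ = ⌈(k : ℝ) + (k : ℝ) / ε⌉₊)
 :
    frobSq A - (∑ i ∈ Finset.univ.filter (fun i : Fin d => (i : ℕ) < k), sqNorm (A.mulVec (v i))) ≤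
      frobSq A - (∑ i ∈ Finset.univ.filter (fun i : Fin d => (i : ℕ) < k),
      sqNorm ((Q (Fin.last n)).mulVec (y i))) ∧
    frobSq A - (∑ i ∈ Finset.univ.filter (fun i : Fin d => (i : ℕ) < k),
      sqNorm ((Q (Fin.last n)).mulVec (y i))) ≤
      (1 + ε) * (frobSq A - ∑ i ∈ Finset.univ.filter (fun i : Fin d => (i : ℕ) < k), sqNorm (A.mulVec (v i))) :=
  fd_residual_norm_bounds_general n d ℓ hℓ A Q C Z Y s δ hQ0 hC hZ hY hSVD hmono hnn hδ hQs v σA hv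
    hσmono hσnn hAv y τ hy hτmono hτnn hQy ε hε0 k hℓdef
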